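/- Let k ∈ L²(ℝ³×ℝ³; ℂ) with ‖k‖₂ > 0, and suppose M := max( esssup_x ‖k(x,·)‖_{L²(ℝ³)}, esssup_y ‖k(·,y)‖_{L²(ℝ³)} ) < ∞. Then for almost every (x,y) ∈ ℝ³×ℝ³ the series r(x,y) := Σ_{n≥1} (1/(2n+1)!) ((k∘k̄)ⁿ∘k)(x,y) converges absolutely and satisfies |r(x,y)| ≤ M² ( sinh(‖k‖₂) − ‖k‖₂ ) / ‖k‖₂². -/

import Mathlib

/-!
Replace `k` by a measurable representative `g` and dominate `|(k∘k̄)ⁿ∘k|` almost everywhere by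
the same composition of the nonnegative kernel `K = |g|`. For `K`, Cauchy–Schwarz in the
middle variable gives `(K∘(K∘B))(x,y)² ≤ ‖K(x,·)‖² ‖K‖₂² ‖B(·,y)‖²`, and iterating the column
estimate `‖(K∘B)(·,y)‖² ≤ ‖K‖₂² ‖B(·,y)‖²` yields `|(k∘k̄)ⁿ∘k| ≤ M² ‖k‖₂^(2n-1)` a.e. for
`n ≥ 1`. Summing against `1/(2n+1)!` produces the tail `sinh ‖k‖₂ - ‖k‖₂` of the sinh series.
-/

open MeasureTheory Real
open scoped ENNReal

noncomputable section

abbrev E3 : Type := EuclideanSpace ℝ (Fin 3)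

/-- Composition of integral kernels: `(k₁∘k₂)(x,y) = ∫ k₁(x,z) k₂(z,y) dz`. -/
def kComp (k₁ k₂ : E3 × E3 → ℂ) : E3 × E3 → ℂ :=
  fun p => ∫ z : E3, k₁ (p.1, z) * k₂ (z, p.2)

/-- Pointwise complex conjugate of a kernel. -/
def kConj (k : E3 × E3 → ℂ) : E3 × E3 → ℂ := fun p => starRingEnd ℂ (k p)

/-- `kChain k n = (k∘k̄)ⁿ∘k`. -/
def kChain (k : E3 × E3 → ℂ) : ℕ → E3 × E3 → ℂ
  | 0 => k
  | n + 1 => kComp k (kComp (kConj k) (kChain k n))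

namespace KernelChain

section Product

variable {α β : Type*} [MeasurableSpace α] [MeasurableSpace β] {μ : Measure α} {ν : Measure β}

lemma ae_ae_swap_of_ae_prod [SFinite μ] [SFinite ν] {P : α × β → Prop}
    (h : ∀ᵐ z ∂μ.prod ν, P z) : ∀ᵐ y ∂ν, ∀ᵐ x ∂μ, P (x, y) :=
  Measure.ae_ae_of_ae_prod
    ((Measure.measurePreserving_swap (μ := ν) (ν := μ)).quasiMeasurePreserving.ae h)

lemma lintegral_enorm_sq_eq_ofReal_integral {E : Type*} [NormedAddCommGroup E] {f : α → E}
    (hf : Integrable (fun x => ‖f x‖ ^ 2) μ) :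
    ∫⁻ x, ‖f x‖ₑ ^ 2 ∂μ = ENNReal.ofReal (∫ x, ‖f x‖ ^ 2 ∂μ) := by
  rw [ofReal_integral_eq_lintegral_ofReal hf (Filter.Eventually.of_forall fun x => by positivity)]
  simp_rw [ENNReal.ofReal_pow (norm_nonneg _), ofReal_norm]

variable {E : Type*} [NormedAddCommGroup E] [SFinite μ] [SFinite ν] {f g : α × β → E} {c : ℝ}

lemma ae_lintegral_enorm_sq_row_le (hf : Integrable (fun q => ‖f q‖ ^ 2) (μ.prod ν))
    (hfg : f =ᵐ[μ.prod ν] g) (h : ∀ᵐ x ∂μ, ∫ y, ‖f (x, y)‖ ^ 2 ∂ν ≤ c) :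
    ∀ᵐ x ∂μ, ∫⁻ y, ‖g (x, y)‖ₑ ^ 2 ∂ν ≤ ENNReal.ofReal c := by
  filter_upwards [hf.prod_right_ae, Measure.ae_ae_of_ae_prod hfg, h] with x hx hxg hxc
  calc ∫⁻ y, ‖g (x, y)‖ₑ ^ 2 ∂ν = ∫⁻ y, ‖f (x, y)‖ₑ ^ 2 ∂ν :=
        lintegral_congr_ae (hxg.mono fun y hy => by simp only [hy])
    _ = ENNReal.ofReal (∫ y, ‖f (x, y)‖ ^ 2 ∂ν) := lintegral_enorm_sq_eq_ofReal_integral hx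
    _ ≤ ENNReal.ofReal c := ENNReal.ofReal_le_ofReal hxc

lemma ae_lintegral_enorm_sq_col_le (hf : Integrable (fun q => ‖f q‖ ^ 2) (μ.prod ν))
    (hfg : f =ᵐ[μ.prod ν] g) (h : ∀ᵐ y ∂ν, ∫ x, ‖f (x, y)‖ ^ 2 ∂μ ≤ c) :
    ∀ᵐ y ∂ν, ∫⁻ x, ‖g (x, y)‖ₑ ^ 2 ∂μ ≤ ENNReal.ofReal c :=
  ae_lintegral_enorm_sq_row_le (f := f ∘ Prod.swap) (g := g ∘ Prod.swap) hf.swap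
    ((Measure.measurePreserving_swap (μ := ν) (ν := μ)).quasiMeasurePreserving.ae_eq hfg) h

end Product

section Nonneg

variable {α : Type*} [MeasurableSpace α] (μ : Measure α)

def lcomp (A B : α × α → ℝ≥0∞) : α × α → ℝ≥0∞ :=
  fun p => ∫⁻ z, A (p.1, z) * B (z, p.2) ∂μ

/-- The analogue of `kChain` for a nonnegative kernel, which is its own conjugate. -/
def lchain (K : α × α → ℝ≥0∞) : ℕ → α × α → ℝ≥0∞
  | 0 => K
  | n + 1 => lcomp μ K (lcomp μ K (lchain K n))

variable {μ} {A B K : α × α → ℝ≥0∞}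

lemma lcomp_sq_le (hA : Measurable A) (hB : Measurable B) (p : α × α) :
    lcomp μ A B p ^ 2 ≤ (∫⁻ z, A (p.1, z) ^ 2 ∂μ) * ∫⁻ z, B (z, p.2) ^ 2 ∂μ := by
  have hCS := ENNReal.lintegral_mul_le_Lp_mul_Lq μ Real.HolderConjugate.two_two
    (f := fun z => A (p.1, z)) (g := fun z => B (z, p.2)) (by fun_prop) (by fun_prop)
  simp only [ENNReal.rpow_two, Pi.mul_apply] at hCS
  calc lcomp μ A B p ^ 2
      ≤ ((∫⁻ z, A (p.1, z) ^ 2 ∂μ) ^ (1 / 2 : ℝ) * (∫⁻ z, B (z, p.2) ^ 2 ∂μ) ^ (1 / 2 : ℝ)) ^ 2 :=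
        pow_le_pow_left' hCS 2
    _ = (∫⁻ z, A (p.1, z) ^ 2 ∂μ) * ∫⁻ z, B (z, p.2) ^ 2 ∂μ := by
        simp only [mul_pow, ← ENNReal.rpow_two, ← ENNReal.rpow_mul]
        norm_num

variable [SFinite μ]

lemma measurable_lcomp (hA : Measurable A) (hB : Measurable B) : Measurable (lcomp μ A B) :=
  (show Measurable fun q : (α × α) × α => A (q.1.1, q.2) * B (q.2, q.1.2) by fun_prop)
    |>.lintegral_prod_right'

lemma measurable_lchain (hK : Measurable K) : ∀ n, Measurable (lchain μ K n)
  | 0 => hK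
  | n + 1 => measurable_lcomp hK (measurable_lcomp hK (measurable_lchain hK n))

lemma lintegral_lcomp_sq_le (hA : Measurable A) (hB : Measurable B) (y : α) :
    ∫⁻ x, lcomp μ A B (x, y) ^ 2 ∂μ ≤ (∫⁻ q, A q ^ 2 ∂μ.prod μ) * ∫⁻ z, B (z, y) ^ 2 ∂μ := by
  have hA2 : Measurable fun q => A q ^ 2 := by fun_prop
  calc ∫⁻ x, lcomp μ A B (x, y) ^ 2 ∂μ
      ≤ ∫⁻ x, (∫⁻ z, A (x, z) ^ 2 ∂μ) * ∫⁻ z, B (z, y) ^ 2 ∂μ ∂μ :=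
        lintegral_mono fun x => lcomp_sq_le hA hB (x, y)
    _ = (∫⁻ q, A q ^ 2 ∂μ.prod μ) * ∫⁻ z, B (z, y) ^ 2 ∂μ := by
        rw [lintegral_mul_const _ hA2.lintegral_prod_right', lintegral_prod _ hA2.aemeasurable]

lemma lintegral_lchain_sq_le (hK : Measurable K) (n : ℕ) (y : α) :
    ∫⁻ x, lchain μ K n (x, y) ^ 2 ∂μ ≤
      (∫⁻ q, K q ^ 2 ∂μ.prod μ) ^ (2 * n) * ∫⁻ x, K (x, y) ^ 2 ∂μ := by
  set T := ∫⁻ q, K q ^ 2 ∂μ.prod μ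
  induction n with
  | zero => simp [lchain]
  | succ n ih =>
    calc ∫⁻ x, lchain μ K (n + 1) (x, y) ^ 2 ∂μ
        ≤ T * ∫⁻ z, lcomp μ K (lchain μ K n) (z, y) ^ 2 ∂μ :=
          lintegral_lcomp_sq_le hK (measurable_lcomp hK (measurable_lchain hK n)) y
      _ ≤ T * (T * (T ^ (2 * n) * ∫⁻ x, K (x, y) ^ 2 ∂μ)) := by
          gcongr
          exact (lintegral_lcomp_sq_le hK (measurable_lchain hK n) y).trans (by gcongr)
      _ = T ^ (2 * (n + 1)) * ∫⁻ x, K (x, y) ^ 2 ∂μ := by ring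

lemma lchain_succ_le (hK : Measurable K) {a b : ℝ≥0∞} (hT : ∫⁻ q, K q ^ 2 ∂μ.prod μ ≤ b ^ 2)
    {p : α × α} (hrow : ∫⁻ z, K (p.1, z) ^ 2 ∂μ ≤ a) (hcol : ∫⁻ z, K (z, p.2) ^ 2 ∂μ ≤ a)
    (n : ℕ) : lchain μ K (n + 1) p ≤ a * b ^ (2 * n + 1) := by
  refine (ENNReal.pow_le_pow_left_iff two_ne_zero).1 ?_
  calc lchain μ K (n + 1) p ^ 2
      ≤ (∫⁻ z, K (p.1, z) ^ 2 ∂μ) * ∫⁻ z, lcomp μ K (lchain μ K n) (z, p.2) ^ 2 ∂μ :=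
        lcomp_sq_le hK (measurable_lcomp hK (measurable_lchain hK n)) p
    _ ≤ a * (b ^ 2 * ((b ^ 2) ^ (2 * n) * a)) := by
        gcongr
        refine (lintegral_lcomp_sq_le hK (measurable_lchain hK n) p.2).trans ?_
        gcongr
        exact (lintegral_lchain_sq_le hK n p.2).trans (by gcongr)
    _ = (a * b ^ (2 * n + 1)) ^ 2 := by ring

end Nonneg

lemma ae_enorm_kComp_le {A B : E3 × E3 → ℂ} {A' B' : E3 × E3 → ℝ≥0∞}
    (hA : ∀ᵐ q, ‖A q‖ₑ ≤ A' q) (hB : ∀ᵐ q, ‖B q‖ₑ ≤ B' q) :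
    ∀ᵐ p, ‖kComp A B p‖ₑ ≤ lcomp volume A' B' p := by
  rw [Measure.volume_eq_prod] at hA hB ⊢
  filter_upwards [Measure.quasiMeasurePreserving_fst.ae (Measure.ae_ae_of_ae_prod hA),
    Measure.quasiMeasurePreserving_snd.ae (ae_ae_swap_of_ae_prod hB)] with p hp₁ hp₂
  calc ‖kComp A B p‖ₑ ≤ ∫⁻ z, ‖A (p.1, z) * B (z, p.2)‖ₑ := enorm_integral_le_lintegral_enorm _
    _ ≤ lcomp volume A' B' p := lintegral_mono_ae <| by
        filter_upwards [hp₁, hp₂] with z hz₁ hz₂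
        rw [enorm_mul]
        exact mul_le_mul' hz₁ hz₂

lemma ae_enorm_kChain_le {k : E3 × E3 → ℂ} {K : E3 × E3 → ℝ≥0∞} (hK : ∀ᵐ q, ‖k q‖ₑ ≤ K q) :
    ∀ n, ∀ᵐ p, ‖kChain k n p‖ₑ ≤ lchain volume K n p
  | 0 => hK
  | n + 1 => ae_enorm_kComp_le hK
      (ae_enorm_kComp_le (by simpa [kConj] using hK) (ae_enorm_kChain_le hK n))

/-- At `L = 0` both sides vanish, the right one through `x / 0 = 0`. -/
lemma hasSum_sinh_sub_self_div_sq (L : ℝ) :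
    HasSum (fun n : ℕ => L ^ (2 * n + 1) / Nat.factorial (2 * (n + 1) + 1))
      ((sinh L - L) / L ^ 2) := by
  rcases eq_or_ne L 0 with rfl | hL
  · simp
  have htail := (hasSum_nat_add_iff' 1).2 (Real.hasSum_sinh L)
  simp only [Finset.range_one, Finset.sum_singleton, mul_zero, zero_add, pow_one,
    Nat.factorial_one, Nat.cast_one, div_one] at htail
  refine (htail.div_const (L ^ 2)).congr_fun fun n => ?_
  field_simp
  ring

lemma summable_and_norm_tsum_inv_factorial_mul_le (c : ℕ → ℂ) {C L : ℝ}
    (hc : ∀ n, ‖c n‖ ≤ C * L ^ (2 * n + 1)) :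
    Summable (fun n : ℕ => ‖(Nat.factorial (2 * (n + 1) + 1) : ℂ)⁻¹ * c n‖) ∧
      ‖∑' n : ℕ, (Nat.factorial (2 * (n + 1) + 1) : ℂ)⁻¹ * c n‖ ≤
        C * (sinh L - L) / L ^ 2 := by
  have hS := (hasSum_sinh_sub_self_div_sq L).mul_left C
  have hle : ∀ n, ‖(Nat.factorial (2 * (n + 1) + 1) : ℂ)⁻¹ * c n‖ ≤
      C * (L ^ (2 * n + 1) / Nat.factorial (2 * (n + 1) + 1)) := fun n => by
    rw [norm_mul, norm_inv, Complex.norm_natCast, inv_mul_eq_div, mul_div_assoc']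
    gcongr
    exact hc n
  have hsum := hS.summable.of_nonneg_of_le (fun n => norm_nonneg _) hle
  refine ⟨hsum, ?_⟩
  calc ‖∑' n : ℕ, (Nat.factorial (2 * (n + 1) + 1) : ℂ)⁻¹ * c n‖
      ≤ ∑' n : ℕ, ‖(Nat.factorial (2 * (n + 1) + 1) : ℂ)⁻¹ * c n‖ := norm_tsum_le_tsum_norm hsum
    _ ≤ C * ((sinh L - L) / L ^ 2) := hS.tsum_eq ▸ hsum.tsum_le_tsum hle hS.summable
    _ = C * (sinh L - L) / L ^ 2 := mul_div_assoc' _ _ _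

end KernelChain

open KernelChain

theorem stmt16_general (k : E3 × E3 → ℂ) (hk : MemLp k 2 (volume : Measure (E3 × E3)))
    (M : ℝ)
    (hrow : ∀ᵐ x : E3, (∫ z : E3, ‖k (x, z)‖ ^ 2) ≤ M ^ 2)
    (hcol : ∀ᵐ y : E3, (∫ z : E3, ‖k (z, y)‖ ^ 2) ≤ M ^ 2) :
    ∀ᵐ p : E3 × E3,
      Summable (fun n : ℕ =>
        ‖((Nat.factorial (2 * (n + 1) + 1) : ℂ))⁻¹ * kChain k (n + 1) p‖) ∧
      ‖∑' n : ℕ, ((Nat.factorial (2 * (n + 1) + 1) : ℂ))⁻¹ * kChain k (n + 1) p‖ ≤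
        M ^ 2 * (Real.sinh (Real.sqrt (∫ q : E3 × E3, ‖k q‖ ^ 2))
            - Real.sqrt (∫ q : E3 × E3, ‖k q‖ ^ 2))
          / Real.sqrt (∫ q : E3 × E3, ‖k q‖ ^ 2) ^ 2 := by
  set L := Real.sqrt (∫ q : E3 × E3, ‖k q‖ ^ 2)
  have hL : 0 ≤ L := sqrt_nonneg _
  obtain ⟨g, hg, hkg⟩ := hk.aestronglyMeasurable
  have hk2 : Integrable (fun q => ‖k q‖ ^ 2) (volume.prod volume) :=
    hk.integrable_norm_pow two_ne_zero
  have hT : ∫⁻ q, ‖g q‖ₑ ^ 2 ∂(volume.prod volume) = ENNReal.ofReal L ^ 2 := by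
    rw [← ENNReal.ofReal_pow hL, Real.sq_sqrt (integral_nonneg fun q => by positivity)]
    exact (lintegral_congr_ae (hkg.mono fun q hq => by simp only [hq])).trans
      (lintegral_enorm_sq_eq_ofReal_integral hk2)
  have hbound : ∀ᵐ p : E3 × E3, ∀ n, ‖kChain k (n + 1) p‖ ≤ M ^ 2 * L ^ (2 * n + 1) := by
    refine ae_all_iff.2 fun n => ?_
    filter_upwards [ae_enorm_kChain_le (hkg.mono fun q hq => (congrArg _ hq).le) (n + 1),
      Measure.quasiMeasurePreserving_fst.ae (ae_lintegral_enorm_sq_row_le hk2 hkg hrow),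
      Measure.quasiMeasurePreserving_snd.ae (ae_lintegral_enorm_sq_col_le hk2 hkg hcol)]
      with p hp hprow hpcol
    have := hp.trans (lchain_succ_le hg.measurable.enorm hT.le hprow hpcol n)
    rwa [← ENNReal.ofReal_pow hL, ← ENNReal.ofReal_mul (by positivity), ← ofReal_norm,
      ENNReal.ofReal_le_ofReal_iff (by positivity)] at this
  filter_upwards [hbound] with p hp
  exact summable_and_norm_tsum_inv_factorial_mul_le _ hp

/-- Let `k ∈ L²(ℝ³×ℝ³)` with `‖k‖₂ > 0` and with rows and columns essentially bounded in
`L²` by `M`.  Then for a.e. `(x,y)` the series `r(x,y) = Σ_{n≥1}(1/(2n+1)!)((k∘k̄)ⁿ∘k)(x,y)`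
converges absolutely and `|r(x,y)| ≤ M²(sinh(‖k‖₂) − ‖k‖₂)/‖k‖₂²`. -/
theorem stmt16 (k : E3 × E3 → ℂ) (hk : MemLp k 2 (volume : Measure (E3 × E3)))
    (hkpos : 0 < Real.sqrt (∫ q : E3 × E3, ‖k q‖ ^ 2))
    (M : ℝ) (hM0 : 0 ≤ M)
    (hrow : ∀ᵐ x : E3, (∫ z : E3, ‖k (x, z)‖ ^ 2) ≤ M ^ 2)
    (hcol : ∀ᵐ y : E3, (∫ z : E3, ‖k (z, y)‖ ^ 2) ≤ M ^ 2) :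
    ∀ᵐ p : E3 × E3,
      Summable (fun n : ℕ =>
        ‖((Nat.factorial (2 * (n + 1) + 1) : ℂ))⁻¹ * kChain k (n + 1) p‖) ∧
      ‖∑' n : ℕ, ((Nat.factorial (2 * (n + 1) + 1) : ℂ))⁻¹ * kChain k (n + 1) p‖ ≤
        M ^ 2 * (Real.sinh (Real.sqrt (∫ q : E3 × E3, ‖k q‖ ^ 2))
            - Real.sqrt (∫ q : E3 × E3, ‖k q‖ ^ 2))
          / Real.sqrt (∫ q : E3 × E3, ‖k q‖ ^ 2) ^ 2 :=
  stmt16_general k hk M hrow hcol
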